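/- There exists a polynomial in ℝ[x] that is nonnegative on all of ℝⁿ but is not a sum of squares of polynomials (e.g., the Motzkin polynomial x₁⁴x₂² + x₁²x₂⁴ − 3x₁²x₂² + 1 in two variables). -/

import Mathlib

/-!
Nonnegativity of the Motzkin polynomial `M` is AM–GM for `x⁴y²`, `x²y⁴` and `1`.

Suppose `M = ∑ sᵢ²` and view each `sᵢ` as a polynomial in `x` over `ℝ[y]`. Since `ℝ[y]` is
formally real, the leading coefficients of the squares cannot cancel, so `deg_x sᵢ ≤ 2`; the
same argument applied to the `x⁰`-coefficient, the restriction `y = 0` and the `x⁴`-coefficient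
of `M` (which are `1`, `1` and `y²`) shows that `sᵢ = aᵢ + y bᵢ(y) x + cᵢ(y) x²` with `aᵢ`
constant and `deg cᵢ ≤ 1`. The coefficient of `x²y²` in `∑ sᵢ²` is then `∑ bᵢ(0)² ≥ 0`,
whereas in `M` it is `-3`.
-/

/-- `f` is a sum of squares of polynomials. -/
def IsSOS {n : ℕ} (f : MvPolynomial (Fin n) ℝ) : Prop :=
  ∃ (k : ℕ) (s : Fin k → MvPolynomial (Fin n) ℝ), f = ∑ i, (s i) ^ 2

open Polynomial

variable {R ι : Type*}

theorem IsSumSq.exists_fin_sum_sq [Semiring R] {s : R} (h : IsSumSq s) :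
    ∃ (n : ℕ) (c : Fin n → R), s = ∑ i, c i ^ 2 := by
  induction h with
  | zero => exact ⟨0, ![], by simp⟩
  | sq_add a _ ih =>
    obtain ⟨n, c, rfl⟩ := ih
    exact ⟨n + 1, Fin.cons a c, by simp [Fin.sum_univ_succ, sq]⟩

theorem IsFormallyReal.of_sum_sq_eq_zero [Semiring R]
    (h : ∀ (n : ℕ) (c : Fin n → R), ∑ i, c i ^ 2 = 0 → ∀ i, c i = 0) : IsFormallyReal R :=
  of_eq_zero_of_eq_zero_of_mul_self_add fun {s a} hs hsum => by
    obtain ⟨n, c, rfl⟩ := hs.exists_fin_sum_sq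
    exact h (n + 1) (Fin.cons a c) (by simpa [Fin.sum_univ_succ, sq] using hsum) 0

theorem IsFormallyReal.eq_zero_of_sum_sq_eq_zero [CommRing R] [IsFormallyReal R]
    {s : Finset ι} {c : ι → R} (h : ∑ i ∈ s, c i ^ 2 = 0) {i : ι} (hi : i ∈ s) : c i = 0 := by
  classical
  rw [← Finset.add_sum_erase s _ hi] at h
  exact IsReduced.eq_zero _ ⟨2, eq_zero_of_add_right (IsSquare.sq _).isSumSq (.sum_sq _ _) h⟩

namespace Polynomial

section CommSemiring

variable [CommSemiring R]

theorem coeff_sq_two (p : R[X]) :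
    (p ^ 2).coeff 2 = p.coeff 1 ^ 2 + 2 * p.coeff 0 * p.coeff 2 := by
  rw [sq, coeff_mul, Finset.Nat.sum_antidiagonal_eq_sum_range_succ_mk]
  simp only [Finset.sum_range_succ, Finset.sum_range_zero]
  ring

theorem coeff_two_mul_sum_sq_of_natDegree_le {s : Finset ι} {p : ι → R[X]} {d : ℕ}
    (h : ∀ i ∈ s, (p i).natDegree ≤ d) :
    (∑ i ∈ s, p i ^ 2).coeff (2 * d) = ∑ i ∈ s, (p i).coeff d ^ 2 := by
  rw [finsetSum_coeff]
  exact Finset.sum_congr rfl fun i hi => coeff_pow_of_natDegree_le (h i hi)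

end CommSemiring

variable [CommRing R] [IsFormallyReal R]

theorem natDegree_le_of_sum_sq_eq {s : Finset ι} {p : ι → R[X]} {f : R[X]} {d : ℕ}
    (h : ∑ i ∈ s, p i ^ 2 = f) (hf : f.natDegree ≤ 2 * d) : ∀ i ∈ s, (p i).natDegree ≤ d := by
  intro i hi
  set D := s.sup fun i => (p i).natDegree
  have hle : ∀ i ∈ s, (p i).natDegree ≤ D := fun i hi => Finset.le_sup (f := (natDegree ∘ p)) hi
  suffices D ≤ d from (hle i hi).trans this
  by_contra! hdD
  obtain ⟨j, hj, hjD⟩ := s.exists_mem_eq_sup ⟨i, hi⟩ fun i => (p i).natDegree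
  have htop : ∑ i ∈ s, (p i).coeff D ^ 2 = 0 := by
    rw [← coeff_two_mul_sum_sq_of_natDegree_le hle]
    exact h ▸ coeff_eq_zero_of_natDegree_lt (by omega)
  have hpj : p j = 0 := by
    rw [← leadingCoeff_eq_zero, leadingCoeff, ← hjD]
    exact IsFormallyReal.eq_zero_of_sum_sq_eq_zero htop hj
  simp only [hpj, natDegree_zero] at hjD
  omega

instance : IsFormallyReal R[X] :=
  IsFormallyReal.of_sum_sq_eq_zero fun n p h i => by
    have hconst := natDegree_le_of_sum_sq_eq (d := 0) h (by simp) i (Finset.mem_univ i)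
    have hcoeff : ∑ i, (p i).coeff 0 ^ 2 = 0 := by
      simpa only [map_sum, map_pow, map_zero, constantCoeff_apply] using congrArg constantCoeff h
    rw [eq_C_of_natDegree_le_zero hconst,
      IsFormallyReal.eq_zero_of_sum_sq_eq_zero hcoeff (Finset.mem_univ i), C_0]

end Polynomial

noncomputable def motzkin : MvPolynomial (Fin 2) ℝ :=
  MvPolynomial.X 0 ^ 4 * MvPolynomial.X 1 ^ 2 + MvPolynomial.X 0 ^ 2 * MvPolynomial.X 1 ^ 4
    - 3 * MvPolynomial.X 0 ^ 2 * MvPolynomial.X 1 ^ 2 + 1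

theorem eval_motzkin_nonneg (x : Fin 2 → ℝ) : 0 ≤ MvPolynomial.eval x motzkin := by
  simp only [motzkin, map_add, map_sub, map_mul, map_pow, map_one, map_ofNat, MvPolynomial.eval_X]
  nlinarith [mul_nonneg (sq_nonneg (x 0)) (sq_nonneg (x 1 ^ 2 - 1)),
    mul_nonneg (sq_nonneg (x 1)) (sq_nonneg (x 0 ^ 2 - 1))]

noncomputable def bivariateMotzkin : ℝ[X][X] :=
  C (X ^ 2) * X ^ 4 + C (X ^ 4 - 3 * X ^ 2) * X ^ 2 + 1

theorem aeval_motzkin : MvPolynomial.aeval ![(X : ℝ[X][X]), C X] motzkin = bivariateMotzkin := by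
  simp only [motzkin, bivariateMotzkin, map_add, map_sub, map_mul, map_pow, map_one, map_ofNat,
    MvPolynomial.aeval_X, Matrix.cons_val_zero, Matrix.cons_val_one]
  ring

theorem coeff_bivariateMotzkin_zero : bivariateMotzkin.coeff 0 = 1 := by
  simp only [bivariateMotzkin, coeff_add, coeff_C_mul_X_pow, coeff_one]
  norm_num

theorem coeff_bivariateMotzkin_two : bivariateMotzkin.coeff 2 = X ^ 4 - 3 * X ^ 2 := by
  simp only [bivariateMotzkin, coeff_add, coeff_C_mul_X_pow, coeff_one]
  norm_num

theorem coeff_bivariateMotzkin_four : bivariateMotzkin.coeff 4 = X ^ 2 := by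
  simp only [bivariateMotzkin, coeff_add, coeff_C_mul_X_pow, coeff_one]
  norm_num

theorem coeff_shape_of_sum_sq_eq_bivariateMotzkin {s : Finset ι} {P : ι → ℝ[X][X]}
    (hP : ∑ i ∈ s, P i ^ 2 = bivariateMotzkin) {i : ι} (hi : i ∈ s) :
    ((P i).coeff 0).natDegree = 0 ∧ ((P i).coeff 1).coeff 0 = 0 ∧
      ((P i).coeff 2).natDegree ≤ 1 := by
  have hdeg : ∀ i ∈ s, (P i).natDegree ≤ 2 :=
    natDegree_le_of_sum_sq_eq hP (by rw [bivariateMotzkin]; compute_degree)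
  have hx0 : ∑ i ∈ s, (P i).coeff 0 ^ 2 = 1 := by
    simpa only [map_sum, map_pow, constantCoeff_apply, coeff_bivariateMotzkin_zero] using
      congrArg constantCoeff hP
  have hy0 : ∑ i ∈ s, (P i).map (evalRingHom 0) ^ 2 = 1 := by
    simpa [map_sum, bivariateMotzkin] using congrArg (mapRingHom (evalRingHom 0)) hP
  have hx4 : ∑ i ∈ s, (P i).coeff 2 ^ 2 = X ^ 2 := by
    rw [← coeff_two_mul_sum_sq_of_natDegree_le hdeg, hP, coeff_bivariateMotzkin_four]
  refine ⟨Nat.le_zero.mp (natDegree_le_of_sum_sq_eq (d := 0) hx0 (by simp) i hi), ?_,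
    natDegree_le_of_sum_sq_eq (d := 1) hx4 (by simp) i hi⟩
  have hy0_const := natDegree_le_of_sum_sq_eq (d := 0) hy0 (by simp) i hi
  simpa [coeff_zero_eq_eval_zero, coeff_map] using
    coeff_eq_zero_of_natDegree_lt (p := (P i).map (evalRingHom 0)) (n := 1) (by omega)

theorem sum_sq_ne_bivariateMotzkin (s : Finset ι) (P : ι → ℝ[X][X]) :
    ∑ i ∈ s, P i ^ 2 ≠ bivariateMotzkin := by
  intro hP
  have hx2 : ∑ i ∈ s, ((P i).coeff 1 ^ 2 + 2 * (P i).coeff 0 * (P i).coeff 2) =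
      X ^ 4 - 3 * X ^ 2 := by
    simp only [← coeff_sq_two, ← finsetSum_coeff, hP, coeff_bivariateMotzkin_two]
  have hx2y2 : ∀ i ∈ s, ((P i).coeff 1 ^ 2 + 2 * (P i).coeff 0 * (P i).coeff 2).coeff 2 =
      ((P i).coeff 1).coeff 1 ^ 2 := fun i hi => by
    obtain ⟨hconst, hb0, hlin⟩ := coeff_shape_of_sum_sq_eq_bivariateMotzkin hP hi
    rw [eq_C_of_natDegree_eq_zero hconst, coeff_add, coeff_sq_two, hb0, mul_assoc (2 : ℝ[X]),
      coeff_ofNat_mul, coeff_C_mul, coeff_eq_zero_of_natDegree_lt (hlin.trans_lt one_lt_two)]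
    ring
  have hneg : ∑ i ∈ s, ((P i).coeff 1).coeff 1 ^ 2 = -3 :=
    calc ∑ i ∈ s, ((P i).coeff 1).coeff 1 ^ 2
        = (∑ i ∈ s, ((P i).coeff 1 ^ 2 + 2 * (P i).coeff 0 * (P i).coeff 2)).coeff 2 := by
          rw [finsetSum_coeff]; exact (Finset.sum_congr rfl hx2y2).symm
      _ = -3 := by simp [hx2, coeff_X_pow]
  exact (Finset.sum_nonneg fun i _ => sq_nonneg _).not_gt (by rw [hneg]; norm_num)

theorem not_isSOS_motzkin : ¬ IsSOS motzkin := by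
  rintro ⟨k, s, hs⟩
  apply sum_sq_ne_bivariateMotzkin Finset.univ
    fun i => MvPolynomial.aeval ![(X : ℝ[X][X]), C X] (s i)
  simp only [← map_pow, ← map_sum, ← hs, aeval_motzkin]

/-- There exists a polynomial (e.g. the Motzkin polynomial
`x₁⁴x₂² + x₁²x₂⁴ − 3x₁²x₂² + 1`) that is nonnegative on all of `ℝ²` but is not a sum
of squares of polynomials. -/
theorem stmt6 :
    ∃ p : MvPolynomial (Fin 2) ℝ,
      (∀ x : Fin 2 → ℝ, 0 ≤ MvPolynomial.eval x p) ∧ ¬ IsSOS p :=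
  ⟨motzkin, eval_motzkin_nonneg, not_isSOS_motzkin⟩
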